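/- Let ψ ∈ L²(ℝ), ψ ≠ 0, and N ∈ ℕ, N > 1. Let ⟨ψ⟩_ℤ denote the closed linear span of {T_k ψ : k ∈ ℤ} in L²(ℝ), where T_h f(y) = f(y−h). Then ⟨ψ⟩_ℤ is invariant under all translations T_{k/N}, k ∈ ℤ, if and only if T_{1/N}ψ ∈ ⟨ψ⟩_ℤ. -/

import Mathlib

/-!
Let `V` be the set of functions approximable in `L²` by finite combinations of integer translates
of `ψ`. Since translations are `L²` isometries, `V` is invariant under integer translations, and
its measurable members form a subspace. If `T_{1/N} ψ ∈ V`, then `T_{1/N}` maps every combination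
`∑ c_j T_j ψ` to `∑ c_j T_j (T_{1/N} ψ) ∈ V`, and by closedness `T_{1/N} V ⊆ V`. The translations
preserving `V` form an additive monoid containing `ℤ` and `1/N`, so they contain every
`k/N = ⌊k/N⌋ + r • (1/N)` with `0 ≤ r < N`.

`V` may contain non-measurable functions (the `L²` seminorm of a non-measurable function is a lower
integral), so the triangle inequality is needed when only one summand is measurable.
-/

open MeasureTheory Complex

/-- `g` belongs to the closed linear span in `L²(ℝ)` of the translates `{T_h ψ : h ∈ S}`:
it can be approximated in `L²` norm by finite linear combinations of such translates. -/
def memPrincipal (ψ : ℝ → ℂ) (S : Set ℝ) (g : ℝ → ℂ) : Prop :=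
  ∀ ε : ℝ, 0 < ε → ∃ (F : Finset ℝ) (c : ℝ → ℂ), (↑F : Set ℝ) ⊆ S ∧
    eLpNorm (fun y => g y - ∑ h ∈ F, c h * ψ (y - h)) 2 volume < ENNReal.ofReal ε

/-- The set `ℤ ⊆ ℝ` of integer translations. -/
def intTranslations : Set ℝ := Set.range (fun k : ℤ => (k : ℝ))

open scoped ENNReal translate

namespace ENNReal

theorem lintegral_Lp_add_le_of_aemeasurable_right {α : Type*} [MeasurableSpace α]
    {μ : Measure α} {p : ℝ} {f g : α → ℝ≥0∞} (hg : AEMeasurable g μ) (hp1 : 1 ≤ p) :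
    (∫⁻ a, (f + g) a ^ p ∂μ) ^ (1 / p) ≤
      (∫⁻ a, f a ^ p ∂μ) ^ (1 / p) + (∫⁻ a, g a ^ p ∂μ) ^ (1 / p) := by
  have hp0 : 0 < p := zero_lt_one.trans_le hp1
  -- Replace `(f + g) ^ p` by a measurable minorant `φ` with the same integral; then `f` can be
  -- replaced by the measurable `φ ^ (1 / p) - g ≤ f`.
  obtain ⟨φ, hφ, hφle, hφeq⟩ := exists_measurable_le_lintegral_eq μ fun a => (f + g) a ^ p
  set D : α → ℝ≥0∞ := fun a => φ a ^ (1 / p) - g a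
  have hDf : ∀ a, D a ≤ f a := fun a => tsub_le_iff_right.2 <| by
    simpa [← rpow_mul, hp0.ne'] using rpow_le_rpow (hφle a) (one_div_nonneg.2 hp0.le)
  have hφD : ∀ a, φ a ≤ (D + g) a ^ p := fun a => by
    simpa [D, ← rpow_mul, hp0.ne'] using
      rpow_le_rpow (le_tsub_add (a := g a) (b := φ a ^ (1 / p))) hp0.le
  calc (∫⁻ a, (f + g) a ^ p ∂μ) ^ (1 / p)
      ≤ (∫⁻ a, (D + g) a ^ p ∂μ) ^ (1 / p) := by
        rw [hφeq]; gcongr with a; exact hφD a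
    _ ≤ (∫⁻ a, D a ^ p ∂μ) ^ (1 / p) + (∫⁻ a, g a ^ p ∂μ) ^ (1 / p) :=
        lintegral_Lp_add_le ((hφ.pow_const _).aemeasurable.sub hg) hg hp1
    _ ≤ (∫⁻ a, f a ^ p ∂μ) ^ (1 / p) + (∫⁻ a, g a ^ p ∂μ) ^ (1 / p) := by
        gcongr with a; exact hDf a

end ENNReal

theorem eLpNorm_add_le_of_aestronglyMeasurable_right {α E : Type*} [MeasurableSpace α]
    {μ : Measure α} [NormedAddCommGroup E] {p : ℝ≥0∞} {f g : α → E}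
    (hg : AEStronglyMeasurable g μ) (hp1 : 1 ≤ p) :
    eLpNorm (f + g) p μ ≤ eLpNorm f p μ + eLpNorm g p μ := by
  rcases eq_or_ne p ∞ with rfl | hp_top
  · simp [eLpNormEssSup_add_le]
  have hp0 : p ≠ 0 := (zero_lt_one.trans_le hp1).ne'
  have hp1_real : 1 ≤ p.toReal := by
    rwa [← ENNReal.toReal_one, ENNReal.toReal_le_toReal ENNReal.one_ne_top hp_top]
  simp only [eLpNorm_eq_eLpNorm' hp0 hp_top, eLpNorm']
  calc (∫⁻ a, ‖(f + g) a‖ₑ ^ p.toReal ∂μ) ^ (1 / p.toReal)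
      ≤ (∫⁻ a, ((‖f ·‖ₑ) + (‖g ·‖ₑ)) a ^ p.toReal ∂μ) ^ (1 / p.toReal) := by
        gcongr with a
        exact enorm_add_le _ _
    _ ≤ _ := ENNReal.lintegral_Lp_add_le_of_aemeasurable_right hg.enorm hp1_real

theorem eLpNorm_translate {G E : Type*} [MeasurableSpace G] [AddCommGroup G] [MeasurableAdd G]
    [NormedAddCommGroup E] (μ : Measure G) [μ.IsAddRightInvariant] (a : G) (f : G → E)
    (p : ℝ≥0∞) : eLpNorm (τ a f) p μ = eLpNorm f p μ := by
  change eLpNorm (f ∘ (· - a)) p μ = _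
  rw [← (measurableEmbedding_subRight a).eLpNorm_map_measure,
    (measurePreserving_sub_right μ a).map_eq]

theorem aestronglyMeasurable_translate {G E : Type*} [MeasurableSpace G] [AddCommGroup G]
    [MeasurableAdd G] [TopologicalSpace E] {μ : Measure G} [μ.IsAddRightInvariant] {f : G → E}
    (hf : AEStronglyMeasurable f μ) (a : G) : AEStronglyMeasurable (τ a f) μ :=
  hf.comp_measurePreserving (measurePreserving_sub_right μ a)

def translateSpan (ψ : ℝ → ℂ) (S : Set ℝ) : Submodule ℂ (ℝ → ℂ) :=
  Submodule.span ℂ ((τ · ψ) '' S)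

section translateSpan

variable {ψ t : ℝ → ℂ} {S : Set ℝ}

theorem translate_mem_translateSpan (a : ℝ) (ht : t ∈ translateSpan ψ S) :
    τ a t ∈ translateSpan (τ a ψ) S := by
  induction ht using Submodule.span_induction with
  | mem _ hs =>
    obtain ⟨s, hs, rfl⟩ := hs
    exact translate_comm a s ψ ▸ Submodule.subset_span ⟨s, hs, rfl⟩
  | zero => exact Submodule.zero_mem _
  | add _ _ _ _ h₁ h₂ => exact Submodule.add_mem _ h₁ h₂
  | smul c _ _ h => exact Submodule.smul_mem _ c h

theorem translateSpan_translate_le {S : AddSubmonoid ℝ} {s : ℝ} (hs : s ∈ S) :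
    translateSpan (τ s ψ) S ≤ translateSpan ψ S := by
  refine Submodule.span_le.2 ?_
  rintro _ ⟨r, hr, rfl⟩
  exact Submodule.subset_span ⟨r + s, add_mem hr hs, (translate_translate r s ψ).symm⟩

theorem aestronglyMeasurable_of_mem_translateSpan (hψ : AEStronglyMeasurable ψ volume)
    (ht : t ∈ translateSpan ψ S) : AEStronglyMeasurable t volume := by
  induction ht using Submodule.span_induction with
  | mem _ hs =>
    obtain ⟨s, -, rfl⟩ := hs
    exact aestronglyMeasurable_translate hψ s
  | zero => exact aestronglyMeasurable_zero
  | add _ _ _ _ h₁ h₂ => exact h₁.add h₂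
  | smul c _ _ h => exact h.const_smul c

end translateSpan

section memPrincipal

variable {ψ g t : ℝ → ℂ} {S : Set ℝ}

theorem memPrincipal_iff : memPrincipal ψ S g ↔
    ∀ ε : ℝ≥0∞, 0 < ε → ∃ t ∈ translateSpan ψ S, eLpNorm (g - t) 2 volume < ε := by
  have combo (F : Finset ℝ) (c : ℝ → ℂ) :
      (fun y => g y - ∑ h ∈ F, c h * ψ (y - h)) = g - ∑ h ∈ F, c h • τ h ψ := by
    ext y; simp [Finset.sum_apply]
  constructor
  · intro hg ε hε
    obtain ⟨r, -, hr, hrε⟩ := ENNReal.lt_iff_exists_real_btwn.1 hε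
    obtain ⟨F, c, hF, hlt⟩ := hg r (ENNReal.ofReal_pos.1 hr)
    refine ⟨∑ h ∈ F, c h • τ h ψ, Submodule.sum_mem _ fun h hh =>
      Submodule.smul_mem _ _ (Submodule.subset_span ⟨h, hF hh, rfl⟩), ?_⟩
    rw [combo] at hlt
    exact hlt.trans hrε
  · intro hg ε hε
    obtain ⟨t, ht, hlt⟩ := hg (ENNReal.ofReal ε) (ENNReal.ofReal_pos.2 hε)
    obtain ⟨l, hl, rfl⟩ := (Finsupp.mem_span_image_iff_linearCombination ℂ).1 ht
    refine ⟨l.support, l, hl, ?_⟩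
    rw [Finsupp.linearCombination_apply, Finsupp.sum] at hlt
    rwa [combo]

theorem memPrincipal_of_mem_translateSpan (ht : t ∈ translateSpan ψ S) : memPrincipal ψ S t :=
  memPrincipal_iff.2 fun ε hε => ⟨t, ht, by simpa using hε⟩

theorem memPrincipal_self (h0 : 0 ∈ S) : memPrincipal ψ S ψ :=
  memPrincipal_of_mem_translateSpan (Submodule.subset_span ⟨0, h0, translate_zero ψ⟩)

theorem memPrincipal_of_approx (hψ : AEStronglyMeasurable ψ volume)
    (H : ∀ ε : ℝ≥0∞, 0 < ε → ∃ t, AEStronglyMeasurable t volume ∧ memPrincipal ψ S t ∧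
      eLpNorm (g - t) 2 volume < ε) :
    memPrincipal ψ S g := by
  refine memPrincipal_iff.2 fun ε hε => ?_
  obtain ⟨t, htm, ht, hgt⟩ := H (ε / 2) (ENNReal.half_pos hε.ne')
  obtain ⟨u, hu, htu⟩ := memPrincipal_iff.1 ht (ε / 2) (ENNReal.half_pos hε.ne')
  refine ⟨u, hu, ?_⟩
  calc eLpNorm (g - u) 2 volume = eLpNorm ((g - t) + (t - u)) 2 volume := by
        rw [sub_add_sub_cancel]
    _ ≤ eLpNorm (g - t) 2 volume + eLpNorm (t - u) 2 volume :=
        eLpNorm_add_le_of_aestronglyMeasurable_right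
          (htm.sub (aestronglyMeasurable_of_mem_translateSpan hψ hu)) one_le_two
    _ < ε / 2 + ε / 2 := ENNReal.add_lt_add hgt htu
    _ = ε := ENNReal.add_halves ε

theorem memPrincipal.add {g₁ g₂ : ℝ → ℂ} (hψ : AEStronglyMeasurable ψ volume)
    (h₁ : memPrincipal ψ S g₁) (h₂ : memPrincipal ψ S g₂)
    (hg₂ : AEStronglyMeasurable g₂ volume) : memPrincipal ψ S (g₁ + g₂) := by
  refine memPrincipal_iff.2 fun ε hε => ?_
  obtain ⟨t₁, ht₁, hlt₁⟩ := memPrincipal_iff.1 h₁ (ε / 2) (ENNReal.half_pos hε.ne')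
  obtain ⟨t₂, ht₂, hlt₂⟩ := memPrincipal_iff.1 h₂ (ε / 2) (ENNReal.half_pos hε.ne')
  refine ⟨t₁ + t₂, Submodule.add_mem _ ht₁ ht₂, ?_⟩
  calc eLpNorm (g₁ + g₂ - (t₁ + t₂)) 2 volume = eLpNorm ((g₁ - t₁) + (g₂ - t₂)) 2 volume := by
        rw [add_sub_add_comm]
    _ ≤ eLpNorm (g₁ - t₁) 2 volume + eLpNorm (g₂ - t₂) 2 volume :=
        eLpNorm_add_le_of_aestronglyMeasurable_right
          (hg₂.sub (aestronglyMeasurable_of_mem_translateSpan hψ ht₂)) one_le_two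
    _ < ε / 2 + ε / 2 := ENNReal.add_lt_add hlt₁ hlt₂
    _ = ε := ENNReal.add_halves ε

theorem memPrincipal.const_smul (hg : memPrincipal ψ S g) (c : ℂ) : memPrincipal ψ S (c • g) := by
  refine memPrincipal_iff.2 fun ε hε => ?_
  obtain ⟨t, ht, hlt⟩ := memPrincipal_iff.1 hg (ε / ‖c‖ₑ) (ENNReal.div_pos hε.ne' enorm_ne_top)
  refine ⟨c • t, Submodule.smul_mem _ c ht, ?_⟩
  rw [← smul_sub]
  exact eLpNorm_const_smul_le.trans_lt (ENNReal.mul_lt_of_lt_div' hlt)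

theorem memPrincipal.translate {S : AddSubmonoid ℝ} (hg : memPrincipal ψ S g) {s : ℝ}
    (hs : s ∈ S) : memPrincipal ψ S (τ s g) := by
  refine memPrincipal_iff.2 fun ε hε => ?_
  obtain ⟨t, ht, hlt⟩ := memPrincipal_iff.1 hg ε hε
  refine ⟨τ s t, translateSpan_translate_le hs (translate_mem_translateSpan s ht), ?_⟩
  rwa [← translate_sub_right, eLpNorm_translate]

theorem memPrincipal.of_mem_translateSpan {S : AddSubmonoid ℝ} {q : ℝ → ℂ}
    (hψ : AEStronglyMeasurable ψ volume) (hq : AEStronglyMeasurable q volume)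
    (hqψ : memPrincipal ψ S q) (ht : t ∈ translateSpan q S) : memPrincipal ψ S t := by
  induction ht using Submodule.span_induction with
  | mem _ hs =>
    obtain ⟨s, hs, rfl⟩ := hs
    exact hqψ.translate hs
  | zero => exact memPrincipal_of_mem_translateSpan (Submodule.zero_mem _)
  | add _ u _ hu h₁ h₂ => exact h₁.add hψ h₂ (aestronglyMeasurable_of_mem_translateSpan hq hu)
  | smul c _ _ h => exact h.const_smul c

theorem memPrincipal.translate_of_translate_self {S : AddSubmonoid ℝ}
    (hψ : AEStronglyMeasurable ψ volume) {a : ℝ} (ha : memPrincipal ψ S (τ a ψ))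
    (hg : memPrincipal ψ S g) : memPrincipal ψ S (τ a g) := by
  refine memPrincipal_of_approx hψ fun ε hε => ?_
  obtain ⟨t, ht, hlt⟩ := memPrincipal_iff.1 hg ε hε
  have hat := translate_mem_translateSpan a ht
  have haψ := aestronglyMeasurable_translate hψ a
  refine ⟨τ a t, aestronglyMeasurable_of_mem_translateSpan haψ hat,
    ha.of_mem_translateSpan hψ haψ hat, ?_⟩
  rwa [← translate_sub_right, eLpNorm_translate]

end memPrincipal

def invariantShifts (ψ : ℝ → ℂ) (S : Set ℝ) : AddSubmonoid ℝ where
  carrier := {a | ∀ g, memPrincipal ψ S g → memPrincipal ψ S (τ a g)}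
  zero_mem' g hg := by rwa [translate_zero]
  add_mem' ha hb g hg := by rw [translate_add]; exact ha _ (hb g hg)

theorem mem_invariantShifts {ψ : ℝ → ℂ} {S : Set ℝ} {a : ℝ} :
    a ∈ invariantShifts ψ S ↔ ∀ g, memPrincipal ψ S g → memPrincipal ψ S (τ a g) :=
  Iff.rfl

theorem AddSubmonoid.intCast_div_mem {M : AddSubmonoid ℝ} (hM : ∀ k : ℤ, (k : ℝ) ∈ M) {N : ℕ}
    (hN : N ≠ 0) (h : 1 / (N : ℝ) ∈ M) (k : ℤ) : (k : ℝ) / N ∈ M := by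
  obtain ⟨r, hr⟩ := Int.eq_ofNat_of_zero_le (Int.emod_nonneg k (Int.natCast_ne_zero.2 hN))
  have hk : (k : ℝ) / N = ((k / N : ℤ) : ℝ) + r • (1 / (N : ℝ)) := by
    have := congrArg (fun z : ℤ => (z : ℝ)) (Int.mul_ediv_add_emod k N)
    rw [hr] at this
    push_cast at this
    rw [nsmul_eq_mul]
    field_simp
    linarith
  rw [hk]
  exact add_mem (hM _) (nsmul_mem h r)

theorem invariance_iff_translate_mem_general (ψ : ℝ → ℂ) (hψ : MemLp ψ 2 volume)
    (N : ℕ) (hN : 1 < N) :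
    (∀ g : ℝ → ℂ, memPrincipal ψ intTranslations g →
        ∀ k : ℤ, memPrincipal ψ intTranslations (fun y => g (y - (k : ℝ) / N)))
    ↔ memPrincipal ψ intTranslations (fun y => ψ (y - 1 / N)) := by
  set Z : AddSubmonoid ℝ := AddMonoidHom.mrange (Int.castAddHom ℝ)
  change (∀ g, memPrincipal ψ Z g → ∀ k : ℤ, memPrincipal ψ Z (τ ((k : ℝ) / N) g)) ↔
    memPrincipal ψ Z (τ (1 / (N : ℝ)) ψ)
  constructor
  · intro H
    simpa using H ψ (memPrincipal_self (zero_mem Z)) 1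
  · intro hψN g hg k
    have hZ (j : ℤ) : (j : ℝ) ∈ invariantShifts ψ Z :=
      mem_invariantShifts.2 fun _ hg => hg.translate ⟨j, rfl⟩
    have hN_inv : 1 / (N : ℝ) ∈ invariantShifts ψ Z :=
      mem_invariantShifts.2 fun _ => memPrincipal.translate_of_translate_self hψ.1 hψN
    exact mem_invariantShifts.1 (AddSubmonoid.intCast_div_mem hZ (by omega) hN_inv k) g hg

theorem invariance_iff_translate_mem (ψ : ℝ → ℂ) (hψ : MemLp ψ 2 volume)
    (hψ0 : ¬ ψ =ᵐ[volume] 0) (N : ℕ) (hN : 1 < N) :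
    (∀ g : ℝ → ℂ, memPrincipal ψ intTranslations g →
        ∀ k : ℤ, memPrincipal ψ intTranslations (fun y => g (y - (k : ℝ) / N)))
    ↔ memPrincipal ψ intTranslations (fun y => ψ (y - 1 / N)) :=
  invariance_iff_translate_mem_general ψ hψ N hN
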